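/- arXiv:2401.13985 — 5 statements merged into one kernel-verified Lean document; each statement's English description precedes it below -/
import Mathlib

section
/- There exists an absolute constant C₀ > 0, independent of n, K and X, with the following property. Let K be a compact set in a Banach space X, let n ≥ 1, and let Π_0, …, Π_{n-1}, X_0, …, X_{n-1}, f_1, …, f_{n-1} be generated by the generalized EIM (i.e., X_0 = {0}, Π_0 = 0; for each k, f_k ∈ K satisfies ‖f_k − Π_{k-1} f_k‖ = max_{f ∈ K} ‖f − Π_{k-1} f‖, X_k = span{f_1,…,f_k}, and Π_k : span(K) → X_k is a linear projection restricting to the identity on X_k). Let Λ_k := sup{‖Π_k g‖/‖g‖ : 0 ≠ g ∈ span(K)} be the Lebesgue constants, assumed finite. Then sup_{f ∈ K} ‖f − Π_{n-1} f‖ ≤ C₀ · (1 + Λ_{n-1}) · (∏_{k=1}^{n-1} (1 + Λ_k))^{1/n} · n · ε_n(co(K)). -/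
open scoped BigOperators ENNReal NNReal
open Metric Set MeasureTheory

noncomputable section

/-- Closed symmetric convex hull of `K`. -/
def symConvHull {X : Type*} [NormedAddCommGroup X] [NormedSpace ℝ X] (K : Set X) : Set X :=
  closure (convexHull ℝ (K ∪ -K))

/-- Entropy numbers: minimal radius so that `A` is covered by `2^n` balls. -/
def entropyNum {X : Type*} [NormedAddCommGroup X] (n : ℕ) (A : Set X) : ℝ :=
  sInf {ε : ℝ | 0 < ε ∧ ∃ C : Finset X, C.card ≤ 2 ^ n ∧ A ⊆ ⋃ c ∈ C, Metric.closedBall c ε}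

/-- `δ_{X,n}`: supremum over all `n`-dimensional subspaces of `X` of the Banach–Mazur
distance to `ℓ₂ⁿ`. -/
def deltaBM (X : Type*) [NormedAddCommGroup X] [NormedSpace ℝ X] (n : ℕ) : ℝ :=
  ⨆ Y : {Y : Submodule ℝ X // Module.finrank ℝ Y = n},
    ⨅ T : (Y.1 ≃L[ℝ] EuclideanSpace ℝ (Fin n)),
      ‖T.toContinuousLinearMap‖ * ‖T.symm.toContinuousLinearMap‖

/-- Volume of the unit Euclidean ball in `ℝⁿ`. -/
def volBall (n : ℕ) : ℝ := Real.pi ^ ((n : ℝ) / 2) / Real.Gamma ((n : ℝ) / 2 + 1)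

/-- Modulus of smoothness of a normed space `X`. -/
def modSmooth (X : Type*) [NormedAddCommGroup X] (t : ℝ) : ℝ :=
  sSup {r : ℝ | ∃ x y : X, ‖x‖ = 1 ∧ ‖y‖ = t ∧ r = ‖x + y‖ / 2 + ‖x - y‖ / 2 - 1}

/-- The set of ℓ¹-costs of expansions `f = Σ aᵢ gᵢ` with `gᵢ ∈ K`;
its infimum is `‖f‖_{L1(K)}`. -/
def expanSums {X : Type*} [NormedAddCommGroup X] [NormedSpace ℝ X] (K : Set X) (f : X) :
    Set ℝ :=
  {c | ∃ (a : ℕ → ℝ) (g : ℕ → X), (∀ i, g i ∈ K) ∧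
    HasSum (fun i => a i • g i) f ∧ HasSum (fun i => |a i|) c}

/-- The K-functional between `X` and `L1(K)`. -/
def Kfunctional {X : Type*} [NormedAddCommGroup X] [NormedSpace ℝ X] (K : Set X) (t : ℝ)
    (g : X) : ℝ :=
  sInf {r : ℝ | ∃ h : X, (expanSums K h).Nonempty ∧ r = ‖g - h‖ + t * sInf (expanSums K h)}

/-- The set whose supremum is the interpolation norm `‖g‖_θ`. -/
def thetaSet {X : Type*} [NormedAddCommGroup X] [NormedSpace ℝ X] (K : Set X) (θ : ℝ)
    (g : X) : Set ℝ :=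
  {r | ∃ t : ℝ, 0 < t ∧ r = t ^ (-θ) * Kfunctional K t g}

/-!
Put `σ = ‖x - Π_{n-1} x‖`, `g_m = f_{m+1}` for `m < n - 1` and `g_{n-1} = x`. Since
`Π_{n-1}` fixes `Π_m x ∈ X_m`, the near-best approximation bound gives
`σ ≤ (1 + Λ_{n-1}) ‖x - Π_m x‖`, and the greedy choice of `f_{m+1}` turns this into
`σ ≤ (1 + Λ_{n-1}) ‖g_m - Π_m g_m‖` for every `m`. As `Π_m` fixes `g_0, …, g_{m-1}`, a
combination `∑ c_j g_j` whose last nonzero coefficient is `c_m` is mapped by `I - Π_m` to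
`c_m (g_m - Π_m g_m)`, so `‖∑ c_j g_j‖ ≥ |c_m| δ_m` with `δ_m = σ / ((1 + Λ_{n-1}) (1 + Λ_m))`.

The combinations `∑ v_m (s / δ_m) g_m` with integers `|v_m| ≤ 3 δ_m / D`, where
`D = (∏ δ_m)^{1/n}` and `s = D / (3n)`, have `ℓ¹`-norm of coefficients at most `1`, so they lie
in `co(K)`; there are at least `3^n > 2^n` of them, and any two are at distance at least `s`.
Two of them fall into one of `2^n` balls of radius `ε`, whence `D ≤ 6 n ε`, which is the claim
with `C₀ = 6`.
-/

theorem AbsConvex.sum_smul_mem {E ι : Type*} [AddCommGroup E] [Module ℝ E] {s : Set E}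
    (hs : AbsConvex ℝ s) (h0 : (0 : E) ∈ s) {t : Finset ι} {c : ι → ℝ} {g : ι → E}
    (hg : ∀ i ∈ t, g i ∈ s) (hc : ∑ i ∈ t, |c i| ≤ 1) : ∑ i ∈ t, c i • g i ∈ s := by
  set W := ∑ i ∈ t, |c i|
  rcases (Finset.sum_nonneg fun i _ => abs_nonneg (c i) : 0 ≤ W).eq_or_lt with hW | hW
  · have hc0 : ∀ i ∈ t, |c i| = 0 :=
      (Finset.sum_eq_zero_iff_of_nonneg fun i _ => abs_nonneg (c i)).mp hW.symm
    rwa [Finset.sum_eq_zero fun i hi => by rw [abs_eq_zero.mp (hc0 i hi), zero_smul]]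
  -- `c i • g i = |c i| • (sign (c i) • g i)` writes the sum as `W` times a convex combination
  have hconv : ∑ i ∈ t, (|c i| / W) • ((SignType.sign (c i) : ℝ) • g i) ∈ s :=
    hs.2.sum_mem (fun i _ => by positivity) (by rw [← Finset.sum_div, div_self hW.ne'])
      fun i hi => hs.1.smul_mem (by cases SignType.sign (c i) <;> simp) (hg i hi)
  have hsum : ∑ i ∈ t, c i • g i =
      W • ∑ i ∈ t, (|c i| / W) • ((SignType.sign (c i) : ℝ) • g i) := by
    rw [Finset.smul_sum]
    refine Finset.sum_congr rfl fun i _ => ?_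
    rw [smul_smul, smul_smul, mul_div_cancel₀ _ hW.ne', mul_comm, sign_mul_abs]
  rw [hsum]
  exact hs.1.smul_mem (by rwa [Real.norm_of_nonneg hW.le]) hconv

theorem sum_smul_mem_symConvHull {X ι : Type*} [NormedAddCommGroup X] [NormedSpace ℝ X]
    {K : Set X} (hK : K.Nonempty) {t : Finset ι} {c : ι → ℝ} {g : ι → X}
    (hg : ∀ i ∈ t, g i ∈ K) (hc : ∑ i ∈ t, |c i| ≤ 1) : ∑ i ∈ t, c i • g i ∈ symConvHull K := by
  refine subset_closure ?_
  rw [convexHull_union_neg_eq_absConvexHull]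
  exact absConvex_absConvexHull.sum_smul_mem
    (balanced_absConvexHull.zero_mem (hK.mono subset_absConvexHull))
    (fun i hi => subset_absConvexHull (hg i hi)) hc

theorem isBounded_symConvHull {X : Type*} [NormedAddCommGroup X] [NormedSpace ℝ X]
    {K : Set X} (hK : Bornology.IsBounded K) : Bornology.IsBounded (symConvHull K) :=
  (isBounded_convexHull.2 (hK.union hK.neg)).closure

theorem le_entropyNum {X : Type*} [NormedAddCommGroup X] {n : ℕ} {A : Set X}
    (hA : Bornology.IsBounded A) {b : ℝ}
    (hb : ∀ ε > 0, ∀ C : Finset X, C.card ≤ 2 ^ n → A ⊆ ⋃ c ∈ C, closedBall c ε → b ≤ ε) :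
    b ≤ entropyNum n A := by
  obtain ⟨r, hr0, hr⟩ := hA.subset_closedBall_lt 0 0
  exact le_csInf ⟨r, hr0, {0}, by simp [Nat.one_le_two_pow], by simpa using hr⟩
    fun ε ⟨hε, C, hC, hAC⟩ => hb ε hε C hC hAC

theorem entropyNum_nonneg {X : Type*} [NormedAddCommGroup X] (n : ℕ) (A : Set X) :
    0 ≤ entropyNum n A :=
  Real.sInf_nonneg fun _ hε => hε.1.le

theorem Finset.exists_ne_dist_le_of_subset_iUnion_closedBall {α β : Type*} [PseudoMetricSpace β]
    {s : Finset α} {p : α → β} {A : Set β} (hp : ∀ a ∈ s, p a ∈ A) {C : Finset β} {ε : ℝ}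
    (hAC : A ⊆ ⋃ c ∈ C, closedBall c ε) (hC : C.card < s.card) :
    ∃ a ∈ s, ∃ b ∈ s, a ≠ b ∧ dist (p a) (p b) ≤ 2 * ε := by
  -- off `s` the centre is a dummy `p a`, so that `choose` needs no `Nonempty β`
  have hcenter : ∀ a, ∃ c, a ∈ s → c ∈ C ∧ p a ∈ closedBall c ε := fun a => by
    by_cases ha : a ∈ s
    · obtain ⟨c, hc, hac⟩ : ∃ c ∈ C, p a ∈ closedBall c ε := by simpa using hAC (hp a ha)
      exact ⟨c, fun _ => ⟨hc, hac⟩⟩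
    · exact ⟨p a, fun h => absurd h ha⟩
  choose f hf using hcenter
  have hfC : ∀ a ∈ s, f a ∈ C := fun a ha => (hf a ha).1
  obtain ⟨a, ha, b, hb, hab, hfab⟩ := Finset.exists_ne_map_eq_of_card_lt_of_maps_to hC hfC
  refine ⟨a, ha, b, hb, hab, ?_⟩
  calc dist (p a) (p b) ≤ dist (p a) (f a) + dist (p b) (f a) := dist_triangle_right _ _ _
    _ ≤ ε + ε := add_le_add (hf a ha).2 (hfab ▸ (hf b hb).2)
    _ = 2 * ε := by ring

theorem exists_ne_zero_forall_lt_eq_zero {ι M : Type*} [Fintype ι] [LinearOrder ι] [Zero M]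
    {d : ι → M} (hd : d ≠ 0) : ∃ m, d m ≠ 0 ∧ ∀ j, m < j → d j = 0 := by
  classical
  obtain ⟨i, hi⟩ := Function.ne_iff.mp hd
  obtain ⟨m, hm, hmax⟩ :=
    (Finset.univ.filter (d · ≠ 0)).exists_max_image id ⟨i, by simpa using hi⟩
  refine ⟨m, (Finset.mem_filter.mp hm).2, fun j hj => ?_⟩
  by_contra hdj
  exact (hmax j (by simpa using hdj)).not_gt hj

theorem Fintype.card_piFinset_Icc_neg {ι : Type*} [Fintype ι] [DecidableEq ι] (a : ι → ℕ) :
    (Fintype.piFinset fun m => Finset.Icc (-(a m : ℤ)) (a m)).card = ∏ m, (2 * a m + 1) := by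
  rw [Fintype.card_piFinset]
  exact Finset.prod_congr rfl fun m _ => by rw [Int.card_Icc]; omega

section Triangular

variable {E : Type*} [SeminormedAddCommGroup E] [Module ℝ E] {n : ℕ} {g : Fin n → E}
  {δ : Fin n → ℝ}

theorem le_norm_sub_of_triangular (hδ : ∀ m, 0 < δ m)
    (htri : ∀ (c : Fin n → ℝ) (m : Fin n), (∀ j, m < j → c j = 0) →
      |c m| * δ m ≤ ‖∑ j, c j • g j‖)
    {s : ℝ} (hs : 0 ≤ s) {v v' : Fin n → ℤ} (hvv' : v ≠ v') :
    s ≤ ‖∑ m, ((v m : ℝ) * (s / δ m)) • g m - ∑ m, ((v' m : ℝ) * (s / δ m)) • g m‖ := by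
  obtain ⟨m, hm, htop⟩ := exists_ne_zero_forall_lt_eq_zero (sub_ne_zero.mpr hvv')
  set c : Fin n → ℝ := fun j => ((v - v') j : ℝ) * (s / δ j)
  have hdiff : ∑ m, ((v m : ℝ) * (s / δ m)) • g m - ∑ m, ((v' m : ℝ) * (s / δ m)) • g m =
      ∑ j, c j • g j := by
    simp only [c, Pi.sub_apply, Int.cast_sub, sub_mul, sub_smul, Finset.sum_sub_distrib]
  have hvm : (1 : ℝ) ≤ |((v - v') m : ℝ)| := by exact_mod_cast Int.one_le_abs hm
  calc s ≤ |c m| * δ m := by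
        rw [abs_mul, abs_of_nonneg (div_nonneg hs (hδ m).le), mul_assoc,
          div_mul_cancel₀ _ (hδ m).ne']
        nlinarith
    _ ≤ ‖∑ j, c j • g j‖ := htri c m fun j hj => by
        simp only [c, htop j hj, Int.cast_zero, zero_mul]
    _ = _ := by rw [hdiff]

theorem le_of_subset_iUnion_closedBall_of_triangular (hn : n ≠ 0) {A : Set E}
    (hδ : ∀ m, 0 < δ m) (hA : ∀ c : Fin n → ℝ, ∑ m, |c m| ≤ 1 → ∑ m, c m • g m ∈ A)
    (htri : ∀ (c : Fin n → ℝ) (m : Fin n), (∀ j, m < j → c j = 0) →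
      |c m| * δ m ≤ ‖∑ j, c j • g j‖)
    {D : ℝ} (hD : 0 < D) (hDδ : D ^ n ≤ ∏ m, δ m)
    {ε : ℝ} {C : Finset E} (hC : C.card ≤ 2 ^ n) (hAC : A ⊆ ⋃ c ∈ C, closedBall c ε) :
    D ≤ 6 * n * ε := by
  classical
  have hnR : (0 : ℝ) < n := by positivity
  set s := D / (3 * n) with hs
  have hs0 : 0 < s := by positivity
  set a : Fin n → ℕ := fun m => ⌊3 * δ m / D⌋₊
  set grid := Fintype.piFinset fun m => Finset.Icc (-(a m : ℤ)) (a m)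
  set p : (Fin n → ℤ) → E := fun v => ∑ m, ((v m : ℝ) * (s / δ m)) • g m
  have hp : ∀ v ∈ grid, p v ∈ A := fun v hv => hA _ <| by
    calc ∑ m, |(v m : ℝ) * (s / δ m)| ≤ ∑ _m : Fin n, 1 / (n : ℝ) := by
          refine Finset.sum_le_sum fun m _ => ?_
          have hvm : |(v m : ℝ)| ≤ a m := by
            have := Finset.mem_Icc.mp (Fintype.mem_piFinset.mp hv m)
            exact abs_le.mpr ⟨by exact_mod_cast this.1, by exact_mod_cast this.2⟩
          calc |(v m : ℝ) * (s / δ m)| = |(v m : ℝ)| * (s / δ m) := by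
                rw [abs_mul, abs_of_pos (div_pos hs0 (hδ m))]
            _ ≤ 3 * δ m / D * (s / δ m) :=
                mul_le_mul_of_nonneg_right (hvm.trans (Nat.floor_le (by have := hδ m; positivity)))
                  (div_pos hs0 (hδ m)).le
            _ = 1 / n := by rw [hs]; field_simp [(hδ m).ne']
      _ = 1 := by simp [hnR.ne']
  have hcard : (C.card : ℝ) < grid.card := calc
    (C.card : ℝ) ≤ 2 ^ n := by exact_mod_cast hC
    _ < 3 ^ n := pow_lt_pow_left₀ (by norm_num) (by norm_num) hn
    _ ≤ ∏ m, (3 * δ m / D) := by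
        rw [Finset.prod_div_distrib, Finset.prod_mul_distrib, Finset.prod_const,
          Finset.prod_const, Finset.card_univ, Fintype.card_fin, mul_div_assoc,
          le_mul_iff_one_le_right (by positivity), one_le_div (by positivity)]
        exact hDδ
    _ ≤ ∏ m, (2 * (a m : ℝ) + 1) :=
        Finset.prod_le_prod (fun m _ => by have := hδ m; positivity) fun m _ => by
          have := Nat.lt_floor_add_one (3 * δ m / D)
          linarith [(Nat.cast_nonneg (a m) : (0 : ℝ) ≤ _)]
    _ = grid.card := by rw [Fintype.card_piFinset_Icc_neg]; push_cast; rfl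
  obtain ⟨v, hv, v', hv', hvv', hdist⟩ :=
    Finset.exists_ne_dist_le_of_subset_iUnion_closedBall hp hAC (by exact_mod_cast hcard)
  have hs2 : s ≤ 2 * ε :=
    (le_norm_sub_of_triangular hδ htri hs0.le hvv').trans (by rwa [← dist_eq_norm])
  rw [hs, div_le_iff₀ (by positivity)] at hs2
  linarith

end Triangular

theorem le_mul_entropyNum_of_triangular {E : Type*} [NormedAddCommGroup E] [Module ℝ E]
    {n : ℕ} (hn : n ≠ 0) {A : Set E} (hAb : Bornology.IsBounded A) {g : Fin n → E}
    {δ : Fin n → ℝ} (hδ : ∀ m, 0 < δ m)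
    (hA : ∀ c : Fin n → ℝ, ∑ m, |c m| ≤ 1 → ∑ m, c m • g m ∈ A)
    (htri : ∀ (c : Fin n → ℝ) (m : Fin n), (∀ j, m < j → c j = 0) →
      |c m| * δ m ≤ ‖∑ j, c j • g j‖)
    {D : ℝ} (hD : 0 < D) (hDδ : D ^ n ≤ ∏ m, δ m) :
    D ≤ 6 * n * entropyNum n A := by
  have h6n : (0 : ℝ) < 6 * n := by positivity
  rw [← div_le_iff₀' h6n]
  exact le_entropyNum hAb fun ε _ C hC hAC => (div_le_iff₀' h6n).mpr <|
    le_of_subset_iUnion_closedBall_of_triangular hn hδ hA htri hD hDδ hC hAC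

section Projection

variable {X : Type*} [SeminormedAddCommGroup X] [Module ℝ X] {S : Submodule ℝ X}

theorem norm_sub_apply_le_of_apply_eq (Q : S →ₗ[ℝ] X) {L : ℝ}
    (hQ : ∀ z, ‖Q z‖ ≤ L * ‖(z : X)‖) {w : S} (hw : Q w = w) (x : S) :
    ‖(x : X) - Q x‖ ≤ (1 + L) * ‖(x : X) - w‖ := by
  have hx : (x : X) - Q x = ((x - w : S) : X) - Q (x - w) := by
    rw [map_sub, hw, Submodule.coe_sub]; abel
  calc ‖(x : X) - Q x‖ ≤ ‖((x - w : S) : X)‖ + ‖Q (x - w)‖ := hx ▸ norm_sub_le _ _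
    _ ≤ ‖((x - w : S) : X)‖ + L * ‖((x - w : S) : X)‖ := by gcongr; exact hQ _
    _ = (1 + L) * ‖(x : X) - w‖ := by rw [Submodule.coe_sub]; ring

theorem coe_sum_smul_sub_apply_sum_smul {ι : Type*} [Fintype ι] [LinearOrder ι]
    (Q : S →ₗ[ℝ] X) (g : ι → S) (c : ι → ℝ) {m : ι} (hc : ∀ j, m < j → c j = 0)
    (hQg : ∀ j, j < m → Q (g j) = g j) :
    ((∑ j, c j • g j : S) : X) - Q (∑ j, c j • g j) = c m • ((g m : X) - Q (g m)) := by
  simp only [Submodule.coe_sum, Submodule.coe_smul, map_sum, map_smul, ← Finset.sum_sub_distrib,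
    ← smul_sub]
  refine Finset.sum_eq_single m (fun j _ hjm => ?_) (by simp)
  rcases hjm.lt_or_gt with hj | hj
  · rw [hQg j hj, sub_self, smul_zero]
  · rw [hc j hj, zero_smul]

theorem abs_mul_norm_sub_apply_le_of_triangular [NormSMulClass ℝ X] {ι : Type*} [Fintype ι]
    [LinearOrder ι] (Q : S →ₗ[ℝ] X) {L : ℝ} (hQ : ∀ z, ‖Q z‖ ≤ L * ‖(z : X)‖) (g : ι → S)
    (c : ι → ℝ) {m : ι} (hc : ∀ j, m < j → c j = 0) (hQg : ∀ j, j < m → Q (g j) = g j) :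
    |c m| * ‖(g m : X) - Q (g m)‖ ≤ (1 + L) * ‖∑ j, c j • (g j : X)‖ := by
  have h := norm_sub_apply_le_of_apply_eq Q hQ (w := 0) (map_zero _) (∑ j, c j • g j)
  rwa [coe_sum_smul_sub_apply_sum_smul Q g c hc hQg, norm_smul, Real.norm_eq_abs,
    Submodule.coe_zero, sub_zero, Submodule.coe_sum] at h

end Projection

theorem le_mul_entropyNum_of_residual_le {X : Type*} [NormedAddCommGroup X] [NormedSpace ℝ X]
    {K : Set X} (hK : Bornology.IsBounded K) {S : Submodule ℝ X} {n : ℕ} (hn : n ≠ 0)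
    (Q : Fin n → S →ₗ[ℝ] X) (L : Fin n → ℝ) (hL : ∀ m, 0 ≤ L m)
    (hQ : ∀ m z, ‖Q m z‖ ≤ L m * ‖(z : X)‖) (g : Fin n → S) (hgK : ∀ m, (g m : X) ∈ K)
    (hQg : ∀ j m, j < m → Q m (g j) = g j) {r : ℝ} (hr : ∀ m, r ≤ ‖(g m : X) - Q m (g m)‖) :
    r ≤ 6 * n * (∏ m, (1 + L m)) ^ ((1 : ℝ) / n) * entropyNum n (symConvHull K) := by
  have hL1 : ∀ m, 0 < 1 + L m := fun m => by linarith [hL m]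
  have hprod : 0 < ∏ m, (1 + L m) := Finset.prod_pos fun m _ => hL1 m
  rcases le_or_gt r 0 with hr0 | hr0
  · exact hr0.trans (by have := entropyNum_nonneg n (symConvHull K); positivity)
  set M := (∏ m, (1 + L m)) ^ ((1 : ℝ) / n)
  have hM : 0 < M := by positivity
  have hMn : M ^ n = ∏ m, (1 + L m) := by
    simp only [M, one_div]; exact Real.rpow_inv_natCast_pow hprod.le hn
  have hD : r / M ≤ 6 * n * entropyNum n (symConvHull K) := by
    refine le_mul_entropyNum_of_triangular hn (isBounded_symConvHull hK)
      (g := fun m => (g m : X)) (δ := fun m => r / (1 + L m)) (fun m => div_pos hr0 (hL1 m))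
      (fun c hc => sum_smul_mem_symConvHull ⟨_, hgK ⟨0, Nat.pos_of_ne_zero hn⟩⟩
        (fun m _ => hgK m) hc) (fun c m hc => ?_) (div_pos hr0 hM) ?_
    · rw [mul_div_assoc', div_le_iff₀ (hL1 m), mul_comm _ (1 + L m)]
      exact (mul_le_mul_of_nonneg_left (hr m) (abs_nonneg _)).trans
        (abs_mul_norm_sub_apply_le_of_triangular (Q m) (hQ m) g c hc fun j hj => hQg j m hj)
    · rw [div_pow, Finset.prod_div_distrib, Finset.prod_const, Finset.card_univ,
        Fintype.card_fin, hMn]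
  calc r = r / M * M := (div_mul_cancel₀ r hM.ne').symm
    _ ≤ 6 * n * entropyNum n (symConvHull K) * M := by gcongr
    _ = 6 * n * M * entropyNum n (symConvHull K) := by ring

theorem norm_apply_le_of_isLUB {E F : Type*} [NormedAddCommGroup E] [SeminormedAddCommGroup F]
    {T : E → F} (hT : T 0 = 0) {L : ℝ} (h : IsLUB {c | ∃ x, x ≠ 0 ∧ c = ‖T x‖ / ‖x‖} L)
    (x : E) : ‖T x‖ ≤ L * ‖x‖ := by
  rcases eq_or_ne x 0 with rfl | hx
  · simp [hT]
  · rw [← div_le_iff₀ (norm_pos_iff.mpr hx)]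
    exact h.1 ⟨x, hx, rfl⟩

theorem nonneg_of_isLUB_norm_div {E F : Type*} [NormedAddCommGroup E]
    [SeminormedAddCommGroup F] {T : E → F} {L : ℝ}
    (h : IsLUB {c | ∃ x, x ≠ 0 ∧ c = ‖T x‖ / ‖x‖} L) : 0 ≤ L := by
  obtain ⟨_, x, _, rfl⟩ := h.nonempty
  exact (div_nonneg (norm_nonneg _) (norm_nonneg _)).trans (h.1 ⟨x, ‹_›, rfl⟩)

theorem Fin.prod_univ_succ_eq_mul_prod_Icc {M : Type*} [CommMonoid M] (f : ℕ → M) (N : ℕ) :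
    ∏ m : Fin (N + 1), f m = f 0 * ∏ k ∈ Finset.Icc 1 N, f k := by
  rw [Fin.prod_univ_eq_prod_range, Finset.prod_range_succ', mul_comm, Finset.range_eq_Ico,
    Finset.prod_Ico_add', zero_add, Finset.Ico_add_one_right_eq_Icc]

section Greedy

variable {X : Type*} [NormedAddCommGroup X] [NormedSpace ℝ X] {K : Set X}
  {fs : ℕ → Submodule.span ℝ K} {Xs : ℕ → Submodule ℝ X}

theorem Xs_le_span (hXs : ∀ k, Xs k = Submodule.span ℝ ((fun j => (fs j : X)) '' Set.Icc 1 k))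
    (k : ℕ) : Xs k ≤ Submodule.span ℝ K := by
  rw [hXs k, Submodule.span_le]
  rintro _ ⟨j, _, rfl⟩
  exact (fs j).2

theorem Xs_mono (hXs : ∀ k, Xs k = Submodule.span ℝ ((fun j => (fs j : X)) '' Set.Icc 1 k)) :
    Monotone Xs := fun j k hjk => by
  rw [hXs j, hXs k]
  exact Submodule.span_mono (Set.image_mono (Set.Icc_subset_Icc_right hjk))

theorem fs_mem_Xs (hXs : ∀ k, Xs k = Submodule.span ℝ ((fun j => (fs j : X)) '' Set.Icc 1 k))
    {j k : ℕ} (hj : 1 ≤ j) (hjk : j ≤ k) : (fs j : X) ∈ Xs k := by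
  rw [hXs k]
  exact Submodule.subset_span ⟨j, ⟨hj, hjk⟩, rfl⟩

theorem nonneg_and_norm_apply_le_of_isLUB {P : ℕ → (Submodule.span ℝ K →ₗ[ℝ] X)} {Λ : ℕ → ℝ}
    {N : ℕ} (hP0 : P 0 = 0) (hΛ0 : Λ 0 = 0)
    (hLUB : ∀ k, 1 ≤ k → k ≤ N →
      IsLUB {c : ℝ | ∃ x : Submodule.span ℝ K, x ≠ 0 ∧ c = ‖P k x‖ / ‖(x : X)‖} (Λ k))
    {k : ℕ} (hk : k ≤ N) : 0 ≤ Λ k ∧ ∀ z, ‖P k z‖ ≤ Λ k * ‖(z : X)‖ := by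
  rcases k with _ | k
  · simp [hP0, hΛ0]
  · exact ⟨nonneg_of_isLUB_norm_div (hLUB _ k.succ_pos hk),
      norm_apply_le_of_isLUB (map_zero _) (hLUB _ k.succ_pos hk)⟩

theorem norm_sub_apply_le_of_greedy
    (hXs : ∀ k, Xs k = Submodule.span ℝ ((fun j => (fs j : X)) '' Set.Icc 1 k))
    {P : ℕ → (Submodule.span ℝ K →ₗ[ℝ] X)} {N m : ℕ} (hmN : m ≤ N)
    (hPm : ∀ x, P m x ∈ Xs m) (hPN : ∀ x : Submodule.span ℝ K, (x : X) ∈ Xs N → P N x = x)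
    {L : ℝ} (hL : ∀ z, ‖P N z‖ ≤ L * ‖(z : X)‖) (x : Submodule.span ℝ K) :
    ‖(x : X) - P N x‖ ≤ (1 + L) * ‖(x : X) - P m x‖ :=
  norm_sub_apply_le_of_apply_eq (P N) hL (w := ⟨P m x, Xs_le_span hXs m (hPm x)⟩)
    (hPN _ (Xs_mono hXs hmN (hPm x))) x

-- `x` plays the role of `f_{N+1}`
def greedyPoints (fs : ℕ → Submodule.span ℝ K) (x : Submodule.span ℝ K) (N : ℕ) :
    Fin (N + 1) → Submodule.span ℝ K :=
  Fin.snoc (fun i : Fin N => fs (i + 1)) x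

theorem greedyPoints_mem {x : Submodule.span ℝ K} {N : ℕ}
    (hfsK : ∀ k, 1 ≤ k → k ≤ N → (fs k : X) ∈ K) (hxK : (x : X) ∈ K) (m : Fin (N + 1)) :
    (greedyPoints fs x N m : X) ∈ K :=
  Fin.lastCases (by simpa [greedyPoints] using hxK)
    (fun i => by simpa [greedyPoints] using hfsK (i + 1) (by omega) i.2) m

theorem apply_greedyPoints_of_lt
    (hXs : ∀ k, Xs k = Submodule.span ℝ ((fun j => (fs j : X)) '' Set.Icc 1 k))
    {P : ℕ → (Submodule.span ℝ K →ₗ[ℝ] X)} {x : Submodule.span ℝ K} {N : ℕ}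
    (hPid : ∀ k ≤ N, ∀ x : Submodule.span ℝ K, (x : X) ∈ Xs k → P k x = x)
    {j m : Fin (N + 1)} (hjm : j < m) : P m (greedyPoints fs x N j) = greedyPoints fs x N j := by
  obtain ⟨i, rfl⟩ := Fin.exists_castSucc_eq.mpr (Fin.ne_last_of_lt hjm)
  have him : (i : ℕ) + 1 ≤ m := Fin.lt_def.mp hjm
  simp only [greedyPoints, Fin.snoc_castSucc]
  exact hPid m (Fin.is_le m) _ (fs_mem_Xs hXs (by omega) him)

theorem div_le_norm_sub_apply_greedyPoints
    (hXs : ∀ k, Xs k = Submodule.span ℝ ((fun j => (fs j : X)) '' Set.Icc 1 k))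
    {P : ℕ → (Submodule.span ℝ K →ₗ[ℝ] X)} {x : Submodule.span ℝ K} {N : ℕ}
    (hgreedy : ∀ k, 1 ≤ k → k ≤ N → ∀ x : Submodule.span ℝ K, (x : X) ∈ K →
      ‖(x : X) - P (k - 1) x‖ ≤ ‖(fs k : X) - P (k - 1) (fs k)‖)
    (hPmem : ∀ k ≤ N, ∀ x : Submodule.span ℝ K, P k x ∈ Xs k)
    (hPid : ∀ k ≤ N, ∀ x : Submodule.span ℝ K, (x : X) ∈ Xs k → P k x = x)
    {L : ℝ} (hL : 0 ≤ L) (hPN : ∀ z, ‖P N z‖ ≤ L * ‖(z : X)‖) (hxK : (x : X) ∈ K)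
    (m : Fin (N + 1)) :
    ‖(x : X) - P N x‖ / (1 + L) ≤
      ‖(greedyPoints fs x N m : X) - P m (greedyPoints fs x N m)‖ := by
  have hL1 : 0 < 1 + L := by linarith
  induction m using Fin.lastCases with
  | last => simpa [greedyPoints] using div_le_self (norm_nonneg _) (by linarith)
  | cast i =>
    simp only [greedyPoints, Fin.snoc_castSucc, Fin.val_castSucc]
    rw [div_le_iff₀' hL1]
    refine (norm_sub_apply_le_of_greedy hXs i.2.le (hPmem i i.2.le) (hPid N le_rfl) hPN
      x).trans (mul_le_mul_of_nonneg_left ?_ hL1.le)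
    simpa using hgreedy (i + 1) (by omega) i.2 x hxK

end Greedy

/-- EIM error bound in a general Banach space with an absolute constant. -/
theorem stmt_3 :
    ∃ C₀ : ℝ, 0 < C₀ ∧
      ∀ (X : Type) [NormedAddCommGroup X] [NormedSpace ℝ X] [CompleteSpace X],
      ∀ (K : Set X), IsCompact K →
      ∀ (n : ℕ), 1 ≤ n →
      ∀ (P : ℕ → (Submodule.span ℝ K →ₗ[ℝ] X)) (fs : ℕ → Submodule.span ℝ K)
        (Xs : ℕ → Submodule ℝ X) (Λ : ℕ → ℝ),
      (∀ k, Xs k = Submodule.span ℝ ((fun j => ((fs j : X))) '' Set.Icc 1 k)) →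
      P 0 = 0 →
      (∀ k, 1 ≤ k → k ≤ n - 1 → (fs k : X) ∈ K) →
      (∀ k, 1 ≤ k → k ≤ n - 1 → ∀ x : Submodule.span ℝ K, (x : X) ∈ K →
        ‖(x : X) - P (k - 1) x‖ ≤ ‖(fs k : X) - P (k - 1) (fs k)‖) →
      (∀ k ≤ n - 1, ∀ x : Submodule.span ℝ K, P k x ∈ Xs k) →
      (∀ k ≤ n - 1, ∀ x : Submodule.span ℝ K, (x : X) ∈ Xs k → P k x = x) →
      Λ 0 = 0 →
      (∀ k, 1 ≤ k → k ≤ n - 1 →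
        IsLUB {c : ℝ | ∃ x : Submodule.span ℝ K, x ≠ 0 ∧
          c = ‖P k x‖ / ‖(x : X)‖} (Λ k)) →
      ∀ x : Submodule.span ℝ K, (x : X) ∈ K →
        ‖(x : X) - P (n - 1) x‖
          ≤ C₀ * (1 + Λ (n - 1)) *
              (∏ k ∈ Finset.Icc 1 (n - 1), (1 + Λ k)) ^ ((1 : ℝ) / n) * n *
              entropyNum n (symConvHull K) := by
  refine ⟨6, by norm_num, ?_⟩
  intro X _ _ _ K hK n hn P fs Xs Λ hXs hP0 hfsK hgreedy hPmem hPid hΛ0 hLUB x hxK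
  obtain ⟨N, rfl⟩ : ∃ N, n = N + 1 := ⟨n - 1, by omega⟩
  simp only [Nat.add_sub_cancel] at hfsK hgreedy hPmem hPid hLUB ⊢
  have hΛP := fun k (hk : k ≤ N) => nonneg_and_norm_apply_le_of_isLUB hP0 hΛ0 hLUB hk
  have key := le_mul_entropyNum_of_residual_le hK.isBounded N.succ_ne_zero (fun m => P m)
    (fun m => Λ m) (fun m => (hΛP m m.is_le).1) (fun m => (hΛP m m.is_le).2)
    (greedyPoints fs x N) (greedyPoints_mem hfsK hxK)
    (fun j m => apply_greedyPoints_of_lt hXs hPid)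
    (div_le_norm_sub_apply_greedyPoints hXs hgreedy hPmem hPid (hΛP N le_rfl).1
      (hΛP N le_rfl).2 hxK)
  have hΛN : 0 < 1 + Λ N := by linarith [(hΛP N le_rfl).1]
  rw [Fin.prod_univ_succ_eq_mul_prod_Icc (fun k => 1 + Λ k), hΛ0, add_zero, one_mul,
    div_le_iff₀ hΛN] at key
  linarith
end
end

section
/- Let Y be a normed space and let P : Y → Y be a bounded linear projection (P² = P), P ≠ 0, whose range Z = P(Y) is a finite-dimensional subspace. Then ‖I − P‖ ≤ min(1 + ‖P‖^{-1}, δ_{Y,2}²) · ‖P‖, where the operator norms are taken on Y. -/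
open scoped BigOperators ENNReal NNReal
open Metric Set MeasureTheory

noncomputable section

/-!
The bound `1 + ‖P‖` is the triangle inequality. For the other one, fix `x` with
`v = x - P x ≠ 0` and a nonzero `u ∈ range P` with `P x ∈ ℝ u`. On the plane `Z = span {u, v}`,
`P` restricts to a map `S` such that `S` and `1 - S` take values in lines, and for every isomorphism
`T : Z ≃ ℓ₂²` so does `Q = T S T⁻¹`. On a Euclidean plane such a map satisfies `‖1 - Q‖ ≤ ‖Q‖`
(Kato): with `J` the rotation by a right angle and `ω` the area form, `‖w‖² = ω w (J w)`, and
`ω ((1 - Q) x) y = ω x (Q y)` because `ω` vanishes on each line. Hence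
`‖1 - S‖ ≤ (‖T‖ ‖T⁻¹‖)² ‖S‖`; take the infimum over `T` and the supremum over planes.
-/

open Module

namespace Orientation

variable {E : Type*} [NormedAddCommGroup E] [InnerProductSpace ℝ E] [Fact (finrank ℝ E = 2)]
  (o : Orientation ℝ E (Fin 2))

theorem areaForm_eq_zero_of_mem_span_singleton {u x y : E} (hx : x ∈ ℝ ∙ u) (hy : y ∈ ℝ ∙ u) :
    o.areaForm x y = 0 := by
  obtain ⟨a, rfl⟩ := Submodule.mem_span_singleton.1 hx
  obtain ⟨b, rfl⟩ := Submodule.mem_span_singleton.1 hy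
  simp

theorem areaForm_sub_apply_left (Q : E →ₗ[ℝ] E) {u v : E} (hu : ∀ x, Q x ∈ ℝ ∙ u)
    (hv : ∀ x, x - Q x ∈ ℝ ∙ v) (x y : E) :
    o.areaForm (x - Q x) y = o.areaForm x (Q y) := by
  have hQ := o.areaForm_eq_zero_of_mem_span_singleton (hu x) (hu y)
  have hQ' := o.areaForm_eq_zero_of_mem_span_singleton (hv x) (hv y)
  have hx : x = Q x + (x - Q x) := by abel
  have hy : y = Q y + (y - Q y) := by abel
  calc o.areaForm (x - Q x) y = o.areaForm (x - Q x) (Q y) := by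
        conv_lhs => rw [hy]
        rw [map_add, hQ', add_zero]
    _ = o.areaForm x (Q y) := by
        conv_rhs => rw [hx]
        rw [map_add, LinearMap.add_apply, hQ, zero_add]

end Orientation

attribute [local instance] FiniteDimensional.of_fact_finrank_eq_two in
theorem norm_id_sub_le_norm_of_mem_span_singleton {E : Type*} [NormedAddCommGroup E]
    [InnerProductSpace ℝ E] [Fact (finrank ℝ E = 2)] (Q : E →L[ℝ] E) {u v : E}
    (hu : ∀ x, Q x ∈ ℝ ∙ u) (hv : ∀ x, x - Q x ∈ ℝ ∙ v) :
    ‖ContinuousLinearMap.id ℝ E - Q‖ ≤ ‖Q‖ := by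
  let o : Orientation ℝ E (Fin 2) := (finBasisOfFinrankEq ℝ E Fact.out).orientation
  refine ContinuousLinearMap.opNorm_le_bound _ (norm_nonneg Q) fun x => ?_
  set w := x - Q x
  have key : ‖w‖ * ‖w‖ ≤ ‖Q‖ * ‖x‖ * ‖w‖ :=
    calc ‖w‖ * ‖w‖ = o.areaForm w (o.rightAngleRotation w) := by
          rw [o.areaForm_rightAngleRotation_right, real_inner_self_eq_norm_mul_norm]
      _ = o.areaForm x (Q (o.rightAngleRotation w)) :=
          o.areaForm_sub_apply_left Q.toLinearMap hu hv x _
      _ ≤ ‖x‖ * ‖Q (o.rightAngleRotation w)‖ := o.areaForm_le _ _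
      _ ≤ ‖x‖ * (‖Q‖ * ‖w‖) := by
          gcongr
          simpa using Q.le_opNorm (o.rightAngleRotation w)
      _ = ‖Q‖ * ‖x‖ * ‖w‖ := by ring
  change ‖w‖ ≤ ‖Q‖ * ‖x‖
  rcases (norm_nonneg w).eq_or_lt with hw0 | hw0
  · rw [← hw0]; positivity
  · exact le_of_mul_le_mul_right key hw0

theorem linearIndependent_pair_of_map_eq_zero {K V W : Type*} [Field K] [AddCommGroup V]
    [Module K V] [AddCommGroup W] [Module K W] (f : V →ₗ[K] W) {x y : V} (hx : f x ≠ 0)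
    (hy : f y = 0) (hy0 : y ≠ 0) : LinearIndependent K ![x, y] := by
  refine LinearIndependent.pair_iff.2 fun s t hst => ?_
  have hs : s = 0 := by
    have : s • f x = 0 := by simpa [hy] using congrArg f hst
    exact (smul_eq_zero.1 this).resolve_right hx
  subst hs
  exact ⟨rfl, (smul_eq_zero.1 (by simpa using hst)).resolve_right hy0⟩

theorem EuclideanSpace.norm_le_abs_add_abs (y : EuclideanSpace ℝ (Fin 2)) :
    ‖y‖ ≤ |y 0| + |y 1| := by
  rw [EuclideanSpace.norm_eq, Real.sqrt_le_left (by positivity), Fin.sum_univ_two]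
  simp only [Real.norm_eq_abs, sq_abs]
  nlinarith [abs_nonneg (y 0), abs_nonneg (y 1), sq_abs (y 0), sq_abs (y 1)]

theorem exists_unit_pair_and_dual_of_two_le_finrank {Z : Type*} [NormedAddCommGroup Z]
    [NormedSpace ℝ Z] (hZ : 2 ≤ finrank ℝ Z) :
    ∃ (x₁ x₂ : Z) (g : StrongDual ℝ Z), ‖x₁‖ = 1 ∧ ‖x₂‖ = 1 ∧ ‖g‖ = 1 ∧ g x₁ = 1 ∧ g x₂ = 0 := by
  have : FiniteDimensional ℝ Z := Module.finite_of_finrank_pos (by omega)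
  have : Nontrivial Z := Module.nontrivial_of_finrank_pos (R := ℝ) (by omega)
  obtain ⟨x₁, hx₁⟩ := exists_norm_eq Z zero_le_one
  obtain ⟨g, hg, hgx₁⟩ := exists_dual_vector' ℝ x₁
  have : Nontrivial (LinearMap.ker (g : Z →ₗ[ℝ] ℝ)) := by
    apply Module.nontrivial_of_finrank_pos (R := ℝ)
    have h1 := LinearMap.finrank_range_add_finrank_ker (g : Z →ₗ[ℝ] ℝ)
    have h2 := Submodule.finrank_le (LinearMap.range (g : Z →ₗ[ℝ] ℝ))
    rw [finrank_self] at h2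
    omega
  obtain ⟨⟨x₂, hgx₂⟩, hx₂⟩ := exists_norm_eq (LinearMap.ker (g : Z →ₗ[ℝ] ℝ)) zero_le_one
  exact ⟨x₁, x₂, g, hx₁, hx₂, hg, by simpa [hx₁] using hgx₁, hgx₂⟩

/- `deltaBM` is a supremum of reals, hence `0` unless bounded above: this uniform bound (from a
unit vector, a norming functional and a unit vector in its kernel) is what makes it meaningful. -/
theorem exists_euclidean_equiv_norm_mul_norm_le_six {Z : Type*} [NormedAddCommGroup Z]
    [NormedSpace ℝ Z] (hZ : finrank ℝ Z = 2) :
    ∃ T : Z ≃L[ℝ] EuclideanSpace ℝ (Fin 2),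
      ‖T.toContinuousLinearMap‖ * ‖T.symm.toContinuousLinearMap‖ ≤ 6 := by
  have : FiniteDimensional ℝ Z := .of_finrank_eq_succ hZ
  obtain ⟨x₁, x₂, g, hx₁, hx₂, hg, hgx₁, hgx₂⟩ :=
    exists_unit_pair_and_dual_of_two_le_finrank hZ.ge
  have hind : LinearIndependent ℝ ![x₁, x₂] :=
    linearIndependent_pair_of_map_eq_zero g.toLinearMap (by simp [hgx₁]) hgx₂
      (norm_ne_zero_iff.1 (by simp [hx₂]))
  let b : Basis (Fin 2) ℝ Z := basisOfLinearIndependentOfCardEqFinrank hind (by simp [hZ])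
  let T : Z ≃L[ℝ] EuclideanSpace ℝ (Fin 2) :=
    b.equivFun.toContinuousLinearEquiv.trans (EuclideanSpace.equiv (Fin 2) ℝ).symm
  have hTsymm : ∀ y, T.symm y = y 0 • x₁ + y 1 • x₂ := fun y => by
    simp [T, b, Basis.equivFun_symm_apply, Fin.sum_univ_two]
  have hT0 : ∀ x, T x 0 = g x := fun x => by
    conv_rhs => rw [← T.symm_apply_apply x, hTsymm]
    simp [hgx₁, hgx₂]
  refine ⟨T, ?_⟩
  have hnormT : ‖T.toContinuousLinearMap‖ ≤ 3 := by
    refine ContinuousLinearMap.opNorm_le_bound _ (by norm_num) fun x => ?_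
    have hx : x = T x 0 • x₁ + T x 1 • x₂ := by rw [← hTsymm, T.symm_apply_apply]
    have h1 : |T x 1| = ‖x - g x • x₁‖ := by
      rw [← hT0, sub_eq_of_eq_add' hx, norm_smul, hx₂, mul_one, Real.norm_eq_abs]
    have h2 : ‖x - g x • x₁‖ ≤ 2 * ‖x‖ := by
      calc ‖x - g x • x₁‖ ≤ ‖x‖ + ‖g x‖ * ‖x₁‖ := (norm_sub_le _ _).trans_eq (by rw [norm_smul])
        _ ≤ ‖x‖ + ‖x‖ := by
          rw [hx₁, mul_one]; gcongr; simpa [hg] using g.le_opNorm x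
        _ = 2 * ‖x‖ := by ring
    have h0 : |T x 0| ≤ ‖x‖ := by rw [hT0]; simpa [hg] using g.le_opNorm x
    calc ‖T.toContinuousLinearMap x‖ ≤ |T x 0| + |T x 1| :=
          EuclideanSpace.norm_le_abs_add_abs _
      _ ≤ 3 * ‖x‖ := by linarith
  have hnormTsymm : ‖T.symm.toContinuousLinearMap‖ ≤ 2 := by
    refine ContinuousLinearMap.opNorm_le_bound _ (by norm_num) fun y => ?_
    calc ‖T.symm.toContinuousLinearMap y‖ ≤ ‖y 0 • x₁‖ + ‖y 1 • x₂‖ := by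
          simpa [hTsymm] using norm_add_le (y 0 • x₁) (y 1 • x₂)
      _ ≤ ‖y‖ + ‖y‖ := by
          simp only [norm_smul, hx₁, hx₂, mul_one]
          gcongr <;> exact PiLp.norm_apply_le y _
      _ = 2 * ‖y‖ := by ring
  calc _ ≤ 3 * 2 := mul_le_mul hnormT hnormTsymm (norm_nonneg _) (by norm_num)
    _ = 6 := by norm_num

theorem norm_id_sub_le_of_continuousLinearEquiv {Z F : Type*} [NormedAddCommGroup Z]
    [NormedSpace ℝ Z] [NormedAddCommGroup F] [InnerProductSpace ℝ F] [Fact (finrank ℝ F = 2)]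
    (S : Z →L[ℝ] Z) {u v : Z} (hu : ∀ x, S x ∈ ℝ ∙ u) (hv : ∀ x, x - S x ∈ ℝ ∙ v)
    (T : Z ≃L[ℝ] F) :
    ‖ContinuousLinearMap.id ℝ Z - S‖ ≤
      (‖T.toContinuousLinearMap‖ * ‖T.symm.toContinuousLinearMap‖) ^ 2 * ‖S‖ := by
  set A := T.toContinuousLinearMap
  set B := T.symm.toContinuousLinearMap
  set Q : F →L[ℝ] F := A ∘L S ∘L B
  have hQu : ∀ y, Q y ∈ ℝ ∙ T u := fun y => by
    obtain ⟨a, ha⟩ := Submodule.mem_span_singleton.1 (hu (T.symm y))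
    exact Submodule.mem_span_singleton.2 ⟨a, by simp [Q, A, B, ← ha]⟩
  have hQv : ∀ y, y - Q y ∈ ℝ ∙ T v := fun y => by
    obtain ⟨a, ha⟩ := Submodule.mem_span_singleton.1 (hv (T.symm y))
    exact Submodule.mem_span_singleton.2 ⟨a, by simp [Q, A, B, ← map_smul, ha]⟩
  have hconj : ContinuousLinearMap.id ℝ Z - S = B ∘L (ContinuousLinearMap.id ℝ F - Q) ∘L A := by
    ext x; simp [Q, A, B]
  have hQn : ‖Q‖ ≤ ‖A‖ * ‖S‖ * ‖B‖ :=
    calc ‖Q‖ ≤ ‖A‖ * ‖S ∘L B‖ := ContinuousLinearMap.opNorm_comp_le _ _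
      _ ≤ ‖A‖ * (‖S‖ * ‖B‖) := by gcongr; exact ContinuousLinearMap.opNorm_comp_le _ _
      _ = ‖A‖ * ‖S‖ * ‖B‖ := by ring
  calc ‖ContinuousLinearMap.id ℝ Z - S‖
        ≤ ‖B‖ * (‖ContinuousLinearMap.id ℝ F - Q‖ * ‖A‖) := by
        rw [hconj]
        refine (ContinuousLinearMap.opNorm_comp_le _ _).trans ?_
        gcongr; exact ContinuousLinearMap.opNorm_comp_le _ _
    _ ≤ ‖B‖ * (‖A‖ * ‖S‖ * ‖B‖ * ‖A‖) := by
        gcongr; exact (norm_id_sub_le_norm_of_mem_span_singleton Q hQu hQv).trans hQn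
    _ = (‖A‖ * ‖B‖) ^ 2 * ‖S‖ := by ring

def banachMazurDistEuclidean (Z : Type*) [NormedAddCommGroup Z] [NormedSpace ℝ Z] (n : ℕ) : ℝ :=
  ⨅ T : Z ≃L[ℝ] EuclideanSpace ℝ (Fin n),
    ‖T.toContinuousLinearMap‖ * ‖T.symm.toContinuousLinearMap‖

theorem banachMazurDistEuclidean_nonneg (Z : Type*) [NormedAddCommGroup Z] [NormedSpace ℝ Z]
    (n : ℕ) :
    0 ≤ banachMazurDistEuclidean Z n :=
  Real.iInf_nonneg fun _ => by positivity

theorem le_sq_ciInf_mul {ι : Sort*} [Nonempty ι] {f : ι → ℝ} (hf : ∀ i, 0 ≤ f i) {a b : ℝ}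
    (hb : 0 ≤ b) (h : ∀ i, a ≤ f i ^ 2 * b) : a ≤ (⨅ i, f i) ^ 2 * b := by
  rcases hb.eq_or_lt with rfl | hb
  · simpa using h (Classical.arbitrary ι)
  rw [← div_le_iff₀ hb, ← Real.sqrt_le_left (Real.iInf_nonneg hf)]
  exact le_ciInf fun i => (Real.sqrt_le_left (hf i)).2 ((div_le_iff₀ hb).2 (h i))

theorem norm_id_sub_le_banachMazurDistEuclidean_sq_mul {Z : Type*} [NormedAddCommGroup Z]
    [NormedSpace ℝ Z] (hZ : finrank ℝ Z = 2) (S : Z →L[ℝ] Z) {u v : Z}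
    (hu : ∀ x, S x ∈ ℝ ∙ u) (hv : ∀ x, x - S x ∈ ℝ ∙ v) :
    ‖ContinuousLinearMap.id ℝ Z - S‖ ≤ banachMazurDistEuclidean Z 2 ^ 2 * ‖S‖ := by
  have : FiniteDimensional ℝ Z := .of_finrank_eq_succ hZ
  have : Nonempty (Z ≃L[ℝ] EuclideanSpace ℝ (Fin 2)) :=
    FiniteDimensional.nonempty_continuousLinearEquiv_of_finrank_eq (by simp [hZ])
  have : Fact (finrank ℝ (EuclideanSpace ℝ (Fin 2)) = 2) := ⟨by simp⟩
  exact le_sq_ciInf_mul (fun _ => by positivity) (norm_nonneg S)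
    (norm_id_sub_le_of_continuousLinearEquiv S hu hv)

theorem banachMazurDistEuclidean_le_deltaBM {X : Type*} [NormedAddCommGroup X] [NormedSpace ℝ X]
    (W : Submodule ℝ X) (hW : finrank ℝ W = 2) : banachMazurDistEuclidean W 2 ≤ deltaBM X 2 := by
  refine le_ciSup
    (f := fun W : {W : Submodule ℝ X // finrank ℝ W = 2} => banachMazurDistEuclidean W.1 2)
    ⟨6, ?_⟩ ⟨W, hW⟩
  rintro _ ⟨W', rfl⟩
  obtain ⟨T, hT⟩ := exists_euclidean_equiv_norm_mul_norm_le_six W'.2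
  exact (ciInf_le ⟨0, by rintro _ ⟨T, rfl⟩; positivity⟩ T).trans hT

theorem norm_sub_apply_le_of_mem_span_pair {Y : Type*} [NormedAddCommGroup Y] [NormedSpace ℝ Y]
    (P : Y →L[ℝ] Y) {u v x : Y} (hu0 : u ≠ 0) (hv0 : v ≠ 0) (hPu : P u = u) (hPv : P v = 0)
    (hx : x ∈ Submodule.span ℝ {u, v}) :
    ‖x - P x‖ ≤ deltaBM Y 2 ^ 2 * ‖P‖ * ‖x‖ := by
  set Z := Submodule.span ℝ {u, v}
  have hind : LinearIndependent ℝ ![u, v] :=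
    linearIndependent_pair_of_map_eq_zero P.toLinearMap (by simpa [hPu] using hu0) hPv hv0
  have hZ : finrank ℝ Z = 2 := by
    have h := finrank_span_eq_card hind
    rwa [show Set.range ![u, v] = {u, v} by simp [Set.pair_comm], Fintype.card_fin] at h
  have hPZ : ∀ z ∈ Z, ∃ a b : ℝ, z = a • u + b • v ∧ P z = a • u := fun z hz => by
    obtain ⟨a, b, rfl⟩ := Submodule.mem_span_pair.1 hz
    exact ⟨a, b, rfl, by simp [hPu, hPv]⟩
  have hmaps : ∀ z ∈ Z, P z ∈ Z := fun z hz => by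
    obtain ⟨a, b, -, hPz⟩ := hPZ z hz
    exact hPz ▸ Z.smul_mem a (Submodule.subset_span (by simp))
  set S : Z →L[ℝ] Z := P.restrict hmaps
  have huZ : u ∈ Z := Submodule.subset_span (by simp)
  have hvZ : v ∈ Z := Submodule.subset_span (by simp)
  have hSu : ∀ z, S z ∈ ℝ ∙ (⟨u, huZ⟩ : Z) := fun z => by
    obtain ⟨a, b, -, hPz⟩ := hPZ z z.2
    exact Submodule.mem_span_singleton.2 ⟨a, Subtype.ext (by simp [S, hPz])⟩
  have hSv : ∀ z, z - S z ∈ ℝ ∙ (⟨v, hvZ⟩ : Z) := fun z => by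
    obtain ⟨a, b, hz, hPz⟩ := hPZ z z.2
    refine Submodule.mem_span_singleton.2 ⟨b, Subtype.ext ?_⟩
    simp [S, hz, hPu, hPv]
  have hS : ‖S‖ ≤ ‖P‖ :=
    S.opNorm_le_bound (norm_nonneg P) fun z => P.le_opNorm z
  calc ‖x - P x‖ = ‖(ContinuousLinearMap.id ℝ Z - S) ⟨x, hx⟩‖ := rfl
    _ ≤ ‖ContinuousLinearMap.id ℝ Z - S‖ * ‖x‖ := (ContinuousLinearMap.id ℝ Z - S).le_opNorm _
    _ ≤ banachMazurDistEuclidean Z 2 ^ 2 * ‖S‖ * ‖x‖ := by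
        gcongr; exact norm_id_sub_le_banachMazurDistEuclidean_sq_mul hZ S hSu hSv
    _ ≤ deltaBM Y 2 ^ 2 * ‖P‖ * ‖x‖ := by
        have := banachMazurDistEuclidean_nonneg Z 2
        gcongr; exact banachMazurDistEuclidean_le_deltaBM Z hZ

theorem norm_id_sub_le_deltaBM_sq_mul {Y : Type*} [NormedAddCommGroup Y] [NormedSpace ℝ Y]
    (P : Y →L[ℝ] Y) (hP : ∀ x, P (P x) = P x) (hP0 : P ≠ 0) :
    ‖ContinuousLinearMap.id ℝ Y - P‖ ≤ deltaBM Y 2 ^ 2 * ‖P‖ := by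
  obtain ⟨w, hw⟩ : ∃ w, P w ≠ 0 := by
    by_contra! h
    exact hP0 (ContinuousLinearMap.ext h)
  refine ContinuousLinearMap.opNorm_le_bound _ (by positivity) fun x => ?_
  change ‖x - P x‖ ≤ _
  by_cases hv : x - P x = 0
  · rw [hv, norm_zero]; positivity
  have hPv : P (x - P x) = 0 := by rw [map_sub, hP, sub_self]
  by_cases hPx : P x = 0
  · exact norm_sub_apply_le_of_mem_span_pair P hw hv (hP w) hPv
      (Submodule.mem_span_pair.2 ⟨0, 1, by simp [hPx]⟩)
  · exact norm_sub_apply_le_of_mem_span_pair P hPx hv (hP x) hPv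
      (Submodule.mem_span_pair.2 ⟨1, 1, by simp⟩)

theorem stmt_6_general (Y : Type*) [NormedAddCommGroup Y] [NormedSpace ℝ Y]
    (P : Y →L[ℝ] Y) (hidem : ∀ x, P (P x) = P x) (hP0 : P ≠ 0) :
    ‖ContinuousLinearMap.id ℝ Y - P‖ ≤ min (1 + ‖P‖⁻¹) ((deltaBM Y 2) ^ 2) * ‖P‖ := by
  have hP : 0 < ‖P‖ := norm_pos_iff.2 hP0
  rw [min_mul_of_nonneg _ _ hP.le]
  refine le_min ?_ (norm_id_sub_le_deltaBM_sq_mul P hidem hP0)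
  calc ‖ContinuousLinearMap.id ℝ Y - P‖ ≤ ‖ContinuousLinearMap.id ℝ Y‖ + ‖P‖ := norm_sub_le _ _
    _ ≤ 1 + ‖P‖ := by gcongr; exact ContinuousLinearMap.norm_id_le
    _ = (1 + ‖P‖⁻¹) * ‖P‖ := by field_simp; ring

/-- Stern: projection bound `‖I − P‖ ≤ min(1 + ‖P‖⁻¹, δ_{Y,2}²)‖P‖`. -/
theorem stmt_6 (Y : Type*) [NormedAddCommGroup Y] [NormedSpace ℝ Y]
    (P : Y →L[ℝ] Y) (hidem : ∀ x, P (P x) = P x) (hP0 : P ≠ 0)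
    (hfin : FiniteDimensional ℝ (LinearMap.range P.toLinearMap)) :
    ‖ContinuousLinearMap.id ℝ Y - P‖ ≤ min (1 + ‖P‖⁻¹) ((deltaBM Y 2) ^ 2) * ‖P‖ :=
  stmt_6_general Y P hidem hP0

end
end

section
/- Let H be a Hilbert space and let P : H → H be a bounded linear idempotent operator (P² = P) with P ≠ 0 and P ≠ I. Then ‖I − P‖ = ‖P‖, where ‖·‖ denotes the operator norm on H. -/
open scoped BigOperators ENNReal NNReal
open Metric Set MeasureTheory

noncomputable section

open scoped InnerProductSpace
open RCLike ContinuousLinearMap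

theorem keylemma (p q X r a : ℝ) (h1 : p^2*(X^2 - 2*r + p^2) ≤ q^2*(p^2*X^2 - a^2))
    (h2 : r ≤ a) (h3 : a ≤ p*X) (h4 : 1 ≤ q) (h5 : 0 < p) (h6 : 0 ≤ a)
    (h7 : 0 ≤ X^2 - 2*r + p^2) (h8 : 0 ≤ X) : p ≤ q*X := by
  have key : (q^2*a - p^2)^2 + (q^2-1)*p^2*(p^2 - q^2*X^2) ≤ 0 := by
    nlinarith [mul_le_mul_of_nonneg_left h2 (le_of_lt (mul_pos h5 h5)), sq_nonneg q, mul_pos h5 h5]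
  rcases eq_or_lt_of_le h4 with hq | hq
  · subst hq
    have ha : a = p^2 := by nlinarith [sq_nonneg (a - p^2)]
    nlinarith
  · have hq2 : 0 < q^2 - 1 := by nlinarith
    have h9 : p^2 ≤ q^2*X^2 := by
      nlinarith [sq_nonneg (q^2*a - p^2), mul_pos hq2 (mul_pos h5 h5)]
    nlinarith [mul_nonneg (mul_nonneg (le_trans zero_le_one h4) h8) (le_of_lt h5), mul_pos h5 h5]

theorem halflemma (𝕜 : Type*) [RCLike 𝕜] (H : Type*) [NormedAddCommGroup H]
    [InnerProductSpace 𝕜 H]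
    (P : H →L[𝕜] H) (hidem : ∀ x, P (P x) = P x)
    (hPI : P ≠ ContinuousLinearMap.id 𝕜 H) :
    ‖P‖ ≤ ‖ContinuousLinearMap.id 𝕜 H - P‖ := by
  set Q : H →L[𝕜] H := ContinuousLinearMap.id 𝕜 H - P with hQdef
  have hQapp : ∀ x, Q x = x - P x := fun x => rfl
  have hQP : ∀ x, Q (P x) = 0 := by
    intro x; rw [hQapp, hidem, sub_self]
  have hQ0 : Q ≠ 0 := by
    intro h
    exact hPI (sub_eq_zero.mp (hQdef ▸ h)).symm
  have hQQ : Q.comp Q = Q := by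
    ext x
    simp only [comp_apply, hQapp, map_sub, hidem x]
    abel
  have hq1 : (1:ℝ) ≤ ‖Q‖ := by
    have h1 : ‖Q‖ ≤ ‖Q‖ * ‖Q‖ := by
      conv_lhs => rw [← hQQ]
      exact opNorm_comp_le Q Q
    have h2 : 0 < ‖Q‖ := norm_pos_iff.mpr hQ0
    nlinarith
  apply ContinuousLinearMap.opNorm_le_bound _ (norm_nonneg Q)
  intro x
  by_cases hx : P x = 0
  · rw [hx, norm_zero]
    exact mul_nonneg (norm_nonneg Q) (norm_nonneg x)
  · set p : ℝ := ‖P x‖ with hp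
    have hp0 : 0 < p := norm_pos_iff.mpr hx
    set u : H := ((p:𝕜))⁻¹ • P x with hu
    have hu1 : ‖u‖ = 1 := norm_smul_inv_norm hx
    set c : 𝕜 := ⟪u, x⟫_𝕜 with hc
    set w : H := x - c • u with hw
    have huw : ⟪u, w⟫_𝕜 = 0 := by
      rw [hw, inner_sub_right, inner_smul_right, ← hc,
        inner_self_eq_norm_sq_to_K, hu1]
      push_cast
      ring
    have hwu : ⟪w, c • u⟫_𝕜 = 0 := by
      rw [inner_smul_right, ← inner_conj_symm, huw, map_zero, mul_zero]
    -- Pythagoras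
    have hpyth : ‖x‖^2 = ‖w‖^2 + ‖c‖^2 := by
      have hx' : x = w + c • u := by rw [hw]; abel
      have := norm_add_sq (𝕜 := 𝕜) w (c • u)
      rw [← hx', hwu] at this
      simp only [map_zero, mul_zero, add_zero, norm_smul, hu1, mul_one] at this
      linarith [this]
    -- Q u = 0
    have hQu : Q u = 0 := by rw [hu, _root_.map_smul, hQP, smul_zero]
    have hQw : Q w = Q x := by rw [hw, map_sub, _root_.map_smul, hQu, smul_zero, sub_zero]
    have hQxw : ‖Q x‖ ≤ ‖Q‖ * ‖w‖ := by rw [← hQw]; exact Q.le_opNorm w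
    -- norms of inner products
    have hcval : ‖c‖ * p = ‖⟪P x, x⟫_𝕜‖ := by
      rw [hc, hu, inner_smul_left, norm_mul]
      simp only [map_inv₀, RCLike.conj_ofReal, norm_inv, RCLike.norm_ofReal,
        abs_of_pos hp0]
      field_simp
    set a : ℝ := ‖⟪P x, x⟫_𝕜‖ with ha
    set r : ℝ := re ⟪x, P x⟫_𝕜 with hr
    have hQx2 : ‖Q x‖^2 = ‖x‖^2 - 2*r + p^2 := by
      rw [hQapp]
      exact norm_sub_sq (𝕜 := 𝕜) x (P x)
    have hra : r ≤ a := by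
      rw [hr, ha]
      calc re ⟪x, P x⟫_𝕜 ≤ ‖⟪x, P x⟫_𝕜‖ := re_le_norm _
        _ = ‖⟪P x, x⟫_𝕜‖ := norm_inner_symm x (P x)
    have hax : a ≤ p * ‖x‖ := by
      rw [ha, hp]
      exact norm_inner_le_norm (P x) x
    have ha0 : 0 ≤ a := norm_nonneg _
    -- main inequality
    have h1 : p^2*(‖x‖^2 - 2*r + p^2) ≤ ‖Q‖^2*(p^2*‖x‖^2 - a^2) := by
      have e1 : ‖Q x‖^2 ≤ ‖Q‖^2 * ‖w‖^2 := by
        have := pow_le_pow_left₀ (norm_nonneg (Q x)) hQxw 2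
        rw [mul_pow] at this
        exact this
      have e2 : p^2 * ‖w‖^2 = p^2*‖x‖^2 - a^2 := by
        have : ‖w‖^2 = ‖x‖^2 - ‖c‖^2 := by linarith
        rw [this]
        have : a = ‖c‖ * p := hcval.symm
        rw [this]
        ring
      calc p^2*(‖x‖^2 - 2*r + p^2) = p^2 * ‖Q x‖^2 := by rw [hQx2]
        _ ≤ p^2 * (‖Q‖^2 * ‖w‖^2) := by
            apply mul_le_mul_of_nonneg_left e1 (sq_nonneg p)
        _ = ‖Q‖^2*(p^2*‖x‖^2 - a^2) := by rw [← e2]; ring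
    have := keylemma p ‖Q‖ ‖x‖ r a h1 hra hax hq1 hp0 ha0
      (by rw [← hQx2]; positivity) (norm_nonneg x)
    exact this

/-- Xu–Zikatanov identity: `‖I − P‖ = ‖P‖` for a nontrivial idempotent
on a Hilbert space. -/
theorem stmt_10 (𝕜 : Type*) [RCLike 𝕜] (H : Type*) [NormedAddCommGroup H]
    [InnerProductSpace 𝕜 H] [CompleteSpace H]
    (P : H →L[𝕜] H) (hidem : ∀ x, P (P x) = P x) (hP0 : P ≠ 0)
    (hPI : P ≠ ContinuousLinearMap.id 𝕜 H) :
    ‖ContinuousLinearMap.id 𝕜 H - P‖ = ‖P‖ := by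
  have h1 := halflemma 𝕜 H P hidem hPI
  have hQidem : ∀ x, (ContinuousLinearMap.id 𝕜 H - P) ((ContinuousLinearMap.id 𝕜 H - P) x)
      = (ContinuousLinearMap.id 𝕜 H - P) x := by
    intro x
    simp only [ContinuousLinearMap.sub_apply, ContinuousLinearMap.id_apply, map_sub, hidem x]
    abel
  have hQI : ContinuousLinearMap.id 𝕜 H - P ≠ ContinuousLinearMap.id 𝕜 H := by
    intro h
    exact hP0 (sub_eq_self.mp h)
  have h2 := halflemma 𝕜 H _ hQidem hQI
  rw [sub_sub_cancel] at h2
  exact le_antisymm h2 h1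

end
end

section
/- Let N ≥ 1, let a_0, a_1, …, a_N be nonnegative real numbers with a_0 ≤ 1, and let b_1, …, b_N be positive real numbers. Suppose a_n ≤ a_{n-1}(1 − b_n a_{n-1}) for every 1 ≤ n ≤ N. Then a_N ≤ 1 / (1 + b_1 + ⋯ + b_N). -/
open scoped BigOperators ENNReal NNReal
open Metric Set MeasureTheory

noncomputable section

-- Multiplied out, the claim says `(1 - D x)(1 - b x) + (b x)² ≥ 0`, i.e. `1 + (D + b) x (b x - 1) ≥ 0`;
-- the first form settles `b x ≤ 1`, the second `b x > 1`.
theorem mul_one_sub_mul_le_one_div_add {x b D : ℝ} (hD : 0 < D) (hb : 0 ≤ b) (hx : x ≤ 1 / D) :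
    x * (1 - b * x) ≤ 1 / (D + b) := by
  have hDx : D * x ≤ 1 := by rwa [le_div_iff₀ hD, mul_comm] at hx
  rw [le_div_iff₀ (by positivity)]
  rcases le_or_gt (b * x) 1 with hbx | hbx
  · nlinarith [mul_nonneg (sub_nonneg.2 hDx) (sub_nonneg.2 hbx), sq_nonneg (b * x)]
  · have hx0 : 0 < x := pos_of_mul_pos_right (one_pos.trans hbx) hb
    nlinarith [mul_nonneg (mul_nonneg (add_nonneg hD.le hb) hx0.le) (sub_nonneg.2 hbx.le)]

theorem stmt_14_general (N : ℕ) (a b : ℕ → ℝ)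
    (ha0 : a 0 ≤ 1)
    (hb : ∀ n, 1 ≤ n → n ≤ N → 0 < b n)
    (hrec : ∀ n, 1 ≤ n → n ≤ N → a n ≤ a (n - 1) * (1 - b n * a (n - 1))) :
    a N ≤ 1 / (1 + ∑ k ∈ Finset.Icc 1 N, b k) := by
  suffices h : ∀ n ≤ N, a n ≤ 1 / (1 + ∑ k ∈ Finset.Icc 1 n, b k) from h N le_rfl
  intro n hn
  induction n with
  | zero => simpa using ha0
  | succ n ih =>
    have hsum : 0 ≤ ∑ k ∈ Finset.Icc 1 n, b k :=
      Finset.sum_nonneg fun k hk => (hb k (Finset.mem_Icc.1 hk).1 (by grind)).le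
    rw [Finset.sum_Icc_succ_top (by omega), ← add_assoc]
    calc a (n + 1) ≤ a n * (1 - b (n + 1) * a n) := by simpa using hrec (n + 1) (by omega) hn
      _ ≤ _ := mul_one_sub_mul_le_one_div_add (by positivity) (hb _ (by omega) hn).le (ih (by omega))

/-- induction lemma for greedy error recursions. -/
theorem stmt_14 (N : ℕ) (hN : 1 ≤ N) (a b : ℕ → ℝ)
    (ha : ∀ n ≤ N, 0 ≤ a n) (ha0 : a 0 ≤ 1)
    (hb : ∀ n, 1 ≤ n → n ≤ N → 0 < b n)
    (hrec : ∀ n, 1 ≤ n → n ≤ N → a n ≤ a (n - 1) * (1 - b n * a (n - 1))) :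
    a N ≤ 1 / (1 + ∑ k ∈ Finset.Icc 1 N, b k) :=
  stmt_14_general N a b ha0 hb hrec

end
end

section
/- Let K be a compact set in a Banach space X, let X_{n-1} ⊆ X be a subspace, and let Π_{n-1} : span(K) → X_{n-1} be a linear map restricting to the identity on X_{n-1}, with γ_{n-1} := sup{‖g − Π_{n-1} g‖/‖g‖ : 0 ≠ g ∈ span(K)} finite. If f_n ∈ K satisfies ‖f_n − Π_{n-1} f_n‖ = max_{f ∈ K} ‖f − Π_{n-1} f‖, then dist(f_n, X_{n-1}) ≥ γ_{n-1}^{-1} · sup_{f ∈ K} dist(f, X_{n-1}). -/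
open scoped BigOperators ENNReal NNReal
open Metric Set MeasureTheory

noncomputable section

/-- the EIM greedy selection satisfies the weak reduced-basis greedy
criterion with parameter `γ⁻¹`. -/
theorem stmt_19 (X : Type*) [NormedAddCommGroup X] [NormedSpace ℝ X] [CompleteSpace X]
    (K : Set X) (hK : IsCompact K)
    (Xs : Submodule ℝ X) (hXs : Xs ≤ Submodule.span ℝ K)
    (P : Submodule.span ℝ K →ₗ[ℝ] X)
    (hrange : ∀ x : Submodule.span ℝ K, P x ∈ Xs)
    (hid : ∀ x : Submodule.span ℝ K, (x : X) ∈ Xs → P x = x)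
    (γ : ℝ)
    (hγ : IsLUB {c : ℝ | ∃ x : Submodule.span ℝ K, x ≠ 0 ∧
      c = ‖(x : X) - P x‖ / ‖(x : X)‖} γ)
    (fn : Submodule.span ℝ K) (hfnK : (fn : X) ∈ K)
    (hmax : ∀ x : Submodule.span ℝ K, (x : X) ∈ K →
      ‖(x : X) - P x‖ ≤ ‖(fn : X) - P fn‖) :
    γ⁻¹ * (⨆ f ∈ K, Metric.infDist f (Xs : Set X))
      ≤ Metric.infDist (fn : X) (Xs : Set X) := by
  have hDnn : 0 ≤ Metric.infDist (fn : X) (Xs : Set X) := Metric.infDist_nonneg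
  -- γ ≥ 0
  have hSne : {c : ℝ | ∃ x : Submodule.span ℝ K, x ≠ 0 ∧
      c = ‖(x : X) - P x‖ / ‖(x : X)‖}.Nonempty := by
    by_contra h
    rw [Set.not_nonempty_iff_eq_empty] at h
    have h1 : (γ - 1) ∈ upperBounds {c : ℝ | ∃ x : Submodule.span ℝ K, x ≠ 0 ∧
        c = ‖(x : X) - P x‖ / ‖(x : X)‖} := by
      rw [h]; intro c hc; exact absurd hc (Set.notMem_empty c)
    have := hγ.2 h1
    linarith
  obtain ⟨c, ⟨x, hx0, hc⟩⟩ := hSne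
  have hγnn : 0 ≤ γ := le_trans (by rw [hc]; positivity) (hγ.1 ⟨x, hx0, hc⟩)
  rcases eq_or_lt_of_le hγnn with hγ0 | hγpos
  · rw [← hγ0]; simpa using hDnn
  -- key: ‖fn - P fn‖ ≤ γ * ‖fn - g‖ for g ∈ Xs
  have hkey : ∀ g ∈ (Xs : Set X), ‖(fn : X) - P fn‖ ≤ γ * ‖(fn : X) - g‖ := by
    intro g hg
    set y : Submodule.span ℝ K := fn - ⟨g, hXs hg⟩ with hy
    have hPy : P y = P fn - g := by
      rw [hy, map_sub, hid ⟨g, hXs hg⟩ hg]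
    have hyv : ((y : X)) = (fn : X) - g := rfl
    have hnorm : ‖(y : X) - P y‖ = ‖(fn : X) - P fn‖ := by
      rw [hPy, hyv]; congr 1; abel
    by_cases hy0 : y = 0
    · have : (fn : X) = g := by
        have := congrArg (Subtype.val) hy0
        rw [hyv] at this
        simpa [sub_eq_zero] using this
      have hfnXs : (fn : X) ∈ Xs := this ▸ hg
      rw [hid fn hfnXs]
      simp
      positivity
    · have hyn : 0 < ‖(y : X)‖ := norm_pos_iff.mpr (by simpa using hy0)
      have hub : ‖(y : X) - P y‖ / ‖(y : X)‖ ≤ γ := hγ.1 ⟨y, hy0, rfl⟩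
      have := (div_le_iff₀ hyn).mp hub
      rw [hnorm, hyv] at this
      linarith [this]
  have hXsne : (Xs : Set X).Nonempty := ⟨0, Xs.zero_mem⟩
  have hbound : ‖(fn : X) - P fn‖ ≤ γ * Metric.infDist (fn : X) (Xs : Set X) := by
    have h1 : ‖(fn : X) - P fn‖ / γ ≤ Metric.infDist (fn : X) (Xs : Set X) := by
      rw [Metric.infDist_eq_iInf]
      haveI := hXsne.to_subtype
      refine le_ciInf fun g => ?_
      obtain ⟨g, hg⟩ := g
      rw [dist_eq_norm]
      rw [div_le_iff₀ hγpos]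
      calc ‖(fn : X) - P fn‖ ≤ γ * ‖(fn : X) - g‖ := hkey g hg
        _ = ‖(fn : X) - g‖ * γ := mul_comm _ _
    calc ‖(fn : X) - P fn‖ = γ * (‖(fn : X) - P fn‖ / γ) := by
          field_simp
      _ ≤ γ * Metric.infDist (fn : X) (Xs : Set X) :=
          mul_le_mul_of_nonneg_left h1 hγnn
  have hsup : (⨆ f ∈ K, Metric.infDist f (Xs : Set X))
      ≤ γ * Metric.infDist (fn : X) (Xs : Set X) := by
    have hbnn : 0 ≤ γ * Metric.infDist (fn : X) (Xs : Set X) := by positivity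
    refine Real.iSup_le (fun f => Real.iSup_le (fun hf => ?_) hbnn) hbnn
    have hfspan : f ∈ Submodule.span ℝ K := Submodule.subset_span hf
    calc Metric.infDist f (Xs : Set X)
        ≤ dist f (P ⟨f, hfspan⟩) := Metric.infDist_le_dist_of_mem (hrange _)
      _ = ‖f - P ⟨f, hfspan⟩‖ := dist_eq_norm _ _
      _ ≤ ‖(fn : X) - P fn‖ := hmax ⟨f, hfspan⟩ hf
      _ ≤ γ * Metric.infDist (fn : X) (Xs : Set X) := hbound
  calc γ⁻¹ * (⨆ f ∈ K, Metric.infDist f (Xs : Set X))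
      ≤ γ⁻¹ * (γ * Metric.infDist (fn : X) (Xs : Set X)) :=
        mul_le_mul_of_nonneg_left hsup (by positivity)
    _ = Metric.infDist (fn : X) (Xs : Set X) := by
        field_simp


end
end
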